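/- Let a ∈ ℝ, C > 0, δ > 0, and let f : ℝ → ℂ be a measurable function with f(x) = 0 for x > −a and |f(x)| ≤ C e^{δx} for all x ≤ −a. Then the function F(k) = ∫_{−∞}^{−a} f(x) e^{ikx} dx is well defined and complex differentiable (holomorphic) at every point of the half-plane {k ∈ ℂ : Im k < δ}. -/

import Mathlib

/-! With `ν = μ.withDensity ‖g‖`, absolute convergence of `∫ g e^{zX} dμ` is integrability of
`e^{(Re z) X}` under `ν`, so the strip of convergence is the interior of the exponential
integrability set of `X` under `ν`. There the moment bounds for `|X| e^{vX + s|X|}` dominate the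
`z`-derivative `g X e^{zX}` locally uniformly, and one differentiates under the integral sign.
For the minus-function, the bound `|f x| ≤ C e^{δx}` on `(-∞, -a]` puts every `t > -δ` in that
set, and `k ↦ ik` maps `Im k < δ` into `Re z > -δ`. -/

open Complex MeasureTheory Set ProbabilityTheory
open scoped Real

section WeightedLaplace

variable {α : Type*} [MeasurableSpace α] {μ : Measure α} {g : α → ℂ}

lemma integrable_withDensity_nnnorm_iff (hg : AEMeasurable g μ) {φ : α → ℝ} :
    Integrable φ (μ.withDensity fun x => ‖g x‖₊) ↔ Integrable (fun x => ‖g x‖ * φ x) μ := by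
  simpa [NNReal.smul_def] using integrable_withDensity_iff_integrable_smul₀ hg.nnnorm (g := φ)

lemma integrable_mul_cexp_of_integrable_norm_mul_exp (hg : AEMeasurable g μ)
    {X : α → ℝ} (hX : AEMeasurable X μ) {z : ℂ}
    (h : Integrable (fun x => ‖g x‖ * rexp (z.re * X x)) μ) :
    Integrable (fun x => g x * cexp (z * X x)) μ := by
  refine h.mono' (hg.aestronglyMeasurable.mul (by fun_prop)) (ae_of_all _ fun x => ?_)
  simp [norm_exp]

lemma re_mul_le_add_mul_abs {z w : ℂ} {r : ℝ} (hw : w ∈ Metric.ball z r) (y : ℝ) :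
    w.re * y ≤ z.re * y + r * |y| := by
  have hre : |(w - z).re| ≤ r := (abs_re_le_norm _).trans (mem_ball_iff_norm.mp hw).le
  calc w.re * y = z.re * y + (w - z).re * y := by simp only [sub_re]; ring
    _ ≤ z.re * y + |(w - z).re| * |y| := by rw [← abs_mul]; gcongr; exact le_abs_self _
    _ ≤ z.re * y + r * |y| := by gcongr

theorem hasDerivAt_integral_mul_cexp (hg : AEMeasurable g μ) {X : α → ℝ}
    (hX : AEMeasurable X μ) {z : ℂ}
    (hz : z.re ∈ interior {t | Integrable (fun x => ‖g x‖ * rexp (t * X x)) μ}) :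
    HasDerivAt (fun z => ∫ x, g x * cexp (z * X x) ∂μ)
      (∫ x, g x * (X x * cexp (z * X x)) ∂μ) z := by
  obtain ⟨ε, hε, hball⟩ := Metric.mem_nhds_iff.mp (mem_interior_iff_mem_nhds.mp hz)
  have hint : ∀ t, |t - z.re| < ε → Integrable (fun x => ‖g x‖ * rexp (t * X x)) μ :=
    fun t ht => hball (by rwa [Metric.mem_ball, Real.dist_eq])
  have hexp : ∀ t, |t - z.re| < ε →
      Integrable (fun x => rexp (t * X x)) (μ.withDensity fun x => ‖g x‖₊) :=
    fun t ht => (integrable_withDensity_nnnorm_iff hg).2 (hint t ht)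
  have hbound_int := (integrable_withDensity_nnnorm_iff hg).1
    (integrable_pow_abs_mul_exp_add_of_integrable_exp_mul (v := z.re) (t := ε / 2) (x := ε / 4)
      (hexp _ (by rw [add_sub_cancel_left, abs_of_pos (half_pos hε)]; linarith))
      (hexp _ (by rw [sub_sub_cancel_left, abs_neg, abs_of_pos (half_pos hε)]; linarith))
      (by positivity) (by rw [abs_of_pos (half_pos hε)]; linarith) 1)
  refine (hasDerivAt_integral_of_dominated_loc_of_deriv_le
    (Metric.ball_mem_nhds z (by positivity : 0 < ε / 4))
    (F := fun w x => g x * cexp (w * X x)) (F' := fun w x => g x * (X x * cexp (w * X x)))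
    (.of_forall fun w => hg.aestronglyMeasurable.mul (by fun_prop))
    (integrable_mul_cexp_of_integrable_norm_mul_exp hg hX (hint z.re (by simpa using hε)))
    (hg.aestronglyMeasurable.mul (by fun_prop)) ?_ hbound_int ?_).2
  · refine ae_of_all _ fun x w hw => ?_
    simp only [norm_mul, norm_real, Real.norm_eq_abs, norm_exp, mul_re, ofReal_re, ofReal_im,
      mul_zero, sub_zero, pow_one]
    gcongr
    exact re_mul_le_add_mul_abs hw (X x)
  · exact ae_of_all _ fun x w _ =>
      ((hasDerivAt_mul_const (X x : ℂ)).cexp.const_mul (g x)).congr_deriv (by ring)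

end WeightedLaplace

lemma integrableOn_norm_mul_exp_Iic {f : ℝ → ℂ} {c C δ t : ℝ}
    (hf : AEStronglyMeasurable f (volume.restrict (Iic c)))
    (hbound : ∀ x ≤ c, ‖f x‖ ≤ C * rexp (δ * x)) (ht : -δ < t) :
    IntegrableOn (fun x => ‖f x‖ * rexp (t * x)) (Iic c) := by
  refine ((integrableOn_exp_mul_Iic (by linarith : 0 < δ + t) c).const_mul C).mono'
    (hf.norm.mul (by fun_prop)) ?_
  rw [ae_restrict_iff' measurableSet_Iic]
  filter_upwards with x hx
  calc ‖‖f x‖ * rexp (t * x)‖ = ‖f x‖ * rexp (t * x) := by simp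
    _ ≤ C * rexp (δ * x) * rexp (t * x) := by gcongr; exact hbound x hx
    _ = C * rexp ((δ + t) * x) := by rw [mul_assoc, ← Real.exp_add, add_mul]

theorem minus_function_regular_lower_halfplane_general (a C δ : ℝ)
    (f : ℝ → ℂ) (hf : Measurable f)
    (hbound : ∀ x : ℝ, x ≤ -a → ‖f x‖ ≤ C * Real.exp (δ * x)) :
    ∀ k : ℂ, k.im < δ →
      IntegrableOn (fun x : ℝ => f x * Complex.exp (Complex.I * k * x)) (Iic (-a)) ∧
      DifferentiableAt ℂ
        (fun k' : ℂ => ∫ x in Iic (-a), f x * Complex.exp (Complex.I * k' * x)) k := by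
  intro k hk
  have hstrip : Ioi (-δ) ⊆
      {t | IntegrableOn (fun x => ‖f x‖ * rexp (t * x)) (Iic (-a))} := fun t ht =>
    integrableOn_norm_mul_exp_Iic hf.aestronglyMeasurable hbound ht
  have hk' : (I * k).re ∈ Ioi (-δ) := by simpa using hk
  refine ⟨integrable_mul_cexp_of_integrable_norm_mul_exp hf.aemeasurable aemeasurable_id
    (hstrip hk'), ?_⟩
  have hderiv := hasDerivAt_integral_mul_cexp hf.aemeasurable aemeasurable_id
    (interior_mono hstrip ((isOpen_Ioi (a := -δ)).interior_eq ▸ hk'))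
  exact (hderiv.comp k ((hasDerivAt_id k).const_mul I)).differentiableAt

/-- the half-line Fourier transform of a function supported on `(−∞,−a]`
with exponential bound `|f(x)| ≤ C e^{δx}` is well defined and holomorphic on the
half-plane `Im k < δ`. -/
theorem minus_function_regular_lower_halfplane (a C δ : ℝ) (hC : 0 < C) (hδ : 0 < δ)
    (f : ℝ → ℂ) (hf : Measurable f)
    (hsupp : ∀ x : ℝ, -a < x → f x = 0)
    (hbound : ∀ x : ℝ, x ≤ -a → ‖f x‖ ≤ C * Real.exp (δ * x)) :
    ∀ k : ℂ, k.im < δ →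
      IntegrableOn (fun x : ℝ => f x * Complex.exp (Complex.I * k * x)) (Iic (-a)) ∧
      DifferentiableAt ℂ
        (fun k' : ℂ => ∫ x in Iic (-a), f x * Complex.exp (Complex.I * k' * x)) k :=
  minus_function_regular_lower_halfplane_general a C δ f hf hbound
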